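/- Let A be a Poisson algebra over a field k of characteristic zero, generated as an algebra by a Poisson subalgebra B together with one element x. Suppose α is a Poisson derivation on B and δ(b) := {x,b} − α(b)x lies in B for all b ∈ B. Then δ is a derivation on B satisfying δ({b,b'}) = {δ(b),b'} + {b,δ(b')} + α(b)δ(b') − δ(b)α(b') for all b, b' ∈ B, so that the Poisson polynomial algebra B[X; α, δ]_p exists and the map fixing B and sending X to x is a surjective Poisson algebra homomorphism B[X; α, δ]_p → A. -/

import Mathlib

/-- A Poisson bracket on a commutative `R`-algebra `A`: an `R`-bilinear
(antisymmetric) Lie bracket which is a derivation in each variable. -/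
def IsPoissonBracket (R : Type*) {A : Type*} [CommRing R] [CommRing A] [Algebra R A]
    (br : A → A → A) : Prop :=
  (∀ a b c : A, br (a + b) c = br a c + br b c) ∧
  (∀ a b c : A, br a (b + c) = br a b + br a c) ∧
  (∀ (r : R) (a b : A), br (r • a) b = r • br a b) ∧
  (∀ a b : A, br a b = - br b a) ∧
  (∀ a b c : A, br a (br b c) = br (br a b) c + br b (br a c)) ∧
  (∀ a b c : A, br a (b * c) = br a b * c + b * br a c)


set_option synthInstance.maxHeartbeats 1000000
set_option maxHeartbeats 1000000

namespace St19
open Polynomial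

open Polynomial

variable {R : Type*} [CommRing R]

noncomputable def Tmap (f : R → R) (h0 : f 0 = 0) (p : Polynomial R) : Polynomial R :=
  ⟨⟨Finsupp.mapRange f h0 p.toFinsupp.coeff⟩⟩

theorem Tmap_coeff (f : R → R) (h0 : f 0 = 0) (p : Polynomial R) (n : ℕ) :
    (Tmap f h0 p).coeff n = f (p.coeff n) := by
  simp [Tmap, Polynomial.coeff]

theorem Tmap_add (f : R → R) (h0 : f 0 = 0) (hf : ∀ a b, f (a + b) = f a + f b)
    (p q : Polynomial R) : Tmap f h0 (p + q) = Tmap f h0 p + Tmap f h0 q := by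
  ext n; simp [Tmap_coeff, hf]

theorem Tmap_C (f : R → R) (h0 : f 0 = 0) (b : R) : Tmap f h0 (C b) = C (f b) := by
  ext n; simp only [Tmap_coeff, coeff_C]
  split <;> simp [h0]

theorem Tmap_mon (f : R → R) (h0 : f 0 = 0) (b : R) (j : ℕ) :
    Tmap f h0 (C b * X ^ j) = C (f b) * X ^ j := by
  ext n; simp only [Tmap_coeff, coeff_C_mul, coeff_X_pow, mul_ite, mul_one, mul_zero]
  split <;> simp [h0]

theorem Tmap_mul (f : R → R) (h0 : f 0 = 0) (hf : ∀ a b, f (a + b) = f a + f b)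
    (hd : ∀ a b, f (a * b) = f a * b + a * f b) (p q : Polynomial R) :
    Tmap f h0 (p * q) = Tmap f h0 p * q + p * Tmap f h0 q := by
  ext n
  rw [coeff_add, coeff_mul, coeff_mul, Tmap_coeff, coeff_mul]
  rw [show f (∑ x ∈ Finset.HasAntidiagonal.antidiagonal n, p.coeff x.1 * q.coeff x.2) = ∑ x ∈ Finset.HasAntidiagonal.antidiagonal n, f (p.coeff x.1 * q.coeff x.2) from map_sum (AddMonoidHom.mk' f hf) _ _]
  rw [← Finset.sum_add_distrib]
  refine Finset.sum_congr rfl fun ij _ => ?_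
  simp [hd, Tmap_coeff]

/-- Data for a Poisson-Ore extension. -/
structure PD (k : Type*) (R : Type*) [CommRing k] [CommRing R] [Algebra k R] where
  bb : R → R → R
  al : R → R
  de : R → R
  bb_add_l : ∀ a b c, bb (a + b) c = bb a c + bb b c
  bb_add_r : ∀ a b c, bb a (b + c) = bb a b + bb a c
  bb_smul_l : ∀ (r : k) a b, bb (r • a) b = r • bb a b
  bb_anti : ∀ a b, bb a b = - bb b a
  bb_jac : ∀ a b c, bb a (bb b c) = bb (bb a b) c + bb b (bb a c)
  bb_leib : ∀ a b c, bb a (b * c) = bb a b * c + b * bb a c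
  al_add : ∀ a b, al (a + b) = al a + al b
  al_smul : ∀ (r : k) a, al (r • a) = r • al a
  al_mul : ∀ a b, al (a * b) = al a * b + a * al b
  de_add : ∀ a b, de (a + b) = de a + de b
  de_smul : ∀ (r : k) a, de (r • a) = r • de a
  de_mul : ∀ a b, de (a * b) = de a * b + a * de b
  al_bb : ∀ a b, al (bb a b) = bb (al a) b + bb a (al b)
  de_bb : ∀ a b, de (bb a b) = bb (de a) b + bb a (de b) + al a * de b - de a * al b

variable {k : Type*} [CommRing k] [Algebra k R] (D : PD k R)

theorem PD.bb_zero_r (a : R) : D.bb a 0 = 0 := by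
  have := D.bb_add_r a 0 0; simpa using this.symm
theorem PD.bb_zero_l (a : R) : D.bb 0 a = 0 := by
  rw [D.bb_anti, D.bb_zero_r, neg_zero]
theorem PD.al_zero : D.al 0 = 0 := by have := D.al_add 0 0; simpa using this.symm
theorem PD.de_zero : D.de 0 = 0 := by have := D.de_add 0 0; simpa using this.symm
theorem PD.bb_one_r (a : R) : D.bb a 1 = 0 := by
  have := D.bb_leib a 1 1; simpa using this.symm
theorem PD.bb_one_l (a : R) : D.bb 1 a = 0 := by
  rw [D.bb_anti, D.bb_one_r, neg_zero]
theorem PD.al_one : D.al 1 = 0 := by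
  have := D.al_mul 1 1
  simp only [mul_one, one_mul] at this
  have h2 : D.al 1 + D.al 1 - D.al 1 = D.al 1 - D.al 1 := by
    conv_lhs => rw [← this]
  simpa using h2
theorem PD.de_one : D.de 1 = 0 := by
  have := D.de_mul 1 1
  simp only [mul_one, one_mul] at this
  have h2 : D.de 1 + D.de 1 - D.de 1 = D.de 1 - D.de 1 := by
    conv_lhs => rw [← this]
  simpa using h2

noncomputable def PD.Pb (p q : Polynomial R) : Polynomial R :=
  p.sum fun i a => Tmap (D.bb a) (D.bb_zero_r a) q * X ^ i

noncomputable def PD.E (p : Polynomial R) : Polynomial R :=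
  X * Tmap D.al D.al_zero p + Tmap D.de D.de_zero p

noncomputable def PD.brP (p q : Polynomial R) : Polynomial R :=
  D.Pb p q + derivative p * D.E q - derivative q * D.E p

theorem PD.Pb_mon (a : R) (i : ℕ) (q : Polynomial R) :
    D.Pb (C a * X ^ i) q = Tmap (D.bb a) (D.bb_zero_r a) q * X ^ i := by
  rw [PD.Pb, C_mul_X_pow_eq_monomial, sum_monomial_index]
  have : Tmap (D.bb (0:R)) (D.bb_zero_r 0) q = 0 := by
    ext n; simp [Tmap_coeff, D.bb_zero_l]
  rw [this, zero_mul]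

theorem PD.Pb_C (a : R) (q : Polynomial R) :
    D.Pb (C a) q = Tmap (D.bb a) (D.bb_zero_r a) q := by
  have := D.Pb_mon a 0 q; simpa using this

theorem PD.Pb_X (q : Polynomial R) : D.Pb X q = 0 := by
  have h1 := D.Pb_mon 1 1 q
  simp only [map_one, one_mul, pow_one] at h1
  rw [h1]
  have : Tmap (D.bb (1:R)) (D.bb_zero_r 1) q = 0 := by
    ext n; simp [Tmap_coeff, D.bb_one_l]
  rw [this, zero_mul]

theorem PD.Pb_add_l (p p' q : Polynomial R) :
    D.Pb (p + p') q = D.Pb p q + D.Pb p' q := by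
  rw [PD.Pb, PD.Pb, PD.Pb, sum_add_index]
  · intro i
    have : Tmap (D.bb (0:R)) (D.bb_zero_r 0) q = 0 := by
      ext n; simp [Tmap_coeff, D.bb_zero_l]
    rw [this, zero_mul]
  · intro i a b
    have : Tmap (D.bb (a + b)) (D.bb_zero_r _) q
        = Tmap (D.bb a) (D.bb_zero_r a) q + Tmap (D.bb b) (D.bb_zero_r b) q := by
      ext n; simp [Tmap_coeff, D.bb_add_l]
    rw [this, add_mul]

theorem PD.Pb_add_r (p q q' : Polynomial R) :
    D.Pb p (q + q') = D.Pb p q + D.Pb p q' := by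
  rw [PD.Pb, PD.Pb, PD.Pb, ← sum_add']
  refine congrArg p.sum ?_
  funext i a
  simp only [Pi.add_apply]
  rw [Tmap_add _ _ (D.bb_add_r a), add_mul]

theorem PD.Pb_leib (p q r : Polynomial R) :
    D.Pb p (q * r) = D.Pb p q * r + q * D.Pb p r := by
  rw [PD.Pb, PD.Pb, PD.Pb, Polynomial.sum_def, Polynomial.sum_def, Polynomial.sum_def,
    Finset.mul_sum, Finset.sum_mul, ← Finset.sum_add_distrib]
  refine Finset.sum_congr rfl fun i _ => ?_
  rw [Tmap_mul _ _ (D.bb_add_r _) (D.bb_leib _)]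
  ring

theorem PD.Pb_anti (p q : Polynomial R) : D.Pb p q = - D.Pb q p := by
  induction p using Polynomial.induction_on' with
  | add u v hu hv => rw [D.Pb_add_l, D.Pb_add_r, hu, hv, neg_add]
  | monomial n a =>
    induction q using Polynomial.induction_on' with
    | add u v hu hv => rw [D.Pb_add_l, D.Pb_add_r, hu, hv, neg_add]
    | monomial m b =>
      rw [← C_mul_X_pow_eq_monomial, ← C_mul_X_pow_eq_monomial, D.Pb_mon, D.Pb_mon,
        Tmap_mon, Tmap_mon, D.bb_anti a b]
      simp only [map_neg]
      ring

theorem PD.E_add (p q : Polynomial R) : D.E (p + q) = D.E p + D.E q := by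
  rw [PD.E, PD.E, PD.E, Tmap_add _ _ D.al_add, Tmap_add _ _ D.de_add]
  ring

theorem PD.E_mul (p q : Polynomial R) : D.E (p * q) = D.E p * q + p * D.E q := by
  rw [PD.E, PD.E, PD.E, Tmap_mul _ _ D.al_add D.al_mul, Tmap_mul _ _ D.de_add D.de_mul]
  ring

theorem PD.E_C (b : R) : D.E (C b) = C (D.al b) * X + C (D.de b) := by
  rw [PD.E, Tmap_C, Tmap_C]; ring

theorem PD.E_X : D.E X = 0 := by
  have h1 : Tmap D.al D.al_zero (X : Polynomial R) = 0 := by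
    have := Tmap_mon D.al D.al_zero 1 1
    simpa [D.al_one] using this
  have h2 : Tmap D.de D.de_zero (X : Polynomial R) = 0 := by
    have := Tmap_mon D.de D.de_zero 1 1
    simpa [D.de_one] using this
  rw [PD.E, h1, h2]; ring

theorem PD.brP_X (q : Polynomial R) : D.brP X q = D.E q := by
  rw [PD.brP, D.Pb_X, D.E_X]
  simp

theorem PD.brP_CC (a b : R) : D.brP (C a) (C b) = C (D.bb a b) := by
  rw [PD.brP, D.Pb_C, Tmap_C]
  simp

theorem PD.brP_XC (b : R) : D.brP X (C b) = C (D.al b) * X + C (D.de b) := by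
  rw [D.brP_X, D.E_C]

theorem PD.brP_XX : D.brP X X = 0 := by rw [D.brP_X, D.E_X]

theorem PD.brP_add_l (p p' q : Polynomial R) :
    D.brP (p + p') q = D.brP p q + D.brP p' q := by
  rw [PD.brP, PD.brP, PD.brP, D.Pb_add_l, derivative_add, D.E_add]
  ring

theorem PD.brP_add_r (p q q' : Polynomial R) :
    D.brP p (q + q') = D.brP p q + D.brP p q' := by
  rw [PD.brP, PD.brP, PD.brP, D.Pb_add_r, derivative_add, D.E_add]
  ring

theorem PD.brP_leib (p q r : Polynomial R) :
    D.brP p (q * r) = D.brP p q * r + q * D.brP p r := by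
  rw [PD.brP, PD.brP, PD.brP, D.Pb_leib, derivative_mul, D.E_mul]
  ring

theorem PD.brP_anti (p q : Polynomial R) : D.brP p q = - D.brP q p := by
  rw [PD.brP, PD.brP, D.Pb_anti]
  ring

theorem PD.brP_leib_l (p q r : Polynomial R) :
    D.brP (p * q) r = D.brP p r * q + p * D.brP q r := by
  rw [D.brP_anti, D.brP_leib, D.brP_anti r p, D.brP_anti r q]
  ring

theorem PD.brP_C_zero (c : k) (q : Polynomial R) :
    D.brP (C (algebraMap k R c)) q = 0 := by
  have hb : ∀ b : R, D.bb (algebraMap k R c) b = 0 := by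
    intro b
    have : (algebraMap k R c) = c • (1 : R) := by rw [Algebra.smul_def, mul_one]
    rw [this, D.bb_smul_l, D.bb_one_l, smul_zero]
  have hal : D.al (algebraMap k R c) = 0 := by
    have : (algebraMap k R c) = c • (1 : R) := by rw [Algebra.smul_def, mul_one]
    rw [this, D.al_smul, D.al_one, smul_zero]
  have hde : D.de (algebraMap k R c) = 0 := by
    have : (algebraMap k R c) = c • (1 : R) := by rw [Algebra.smul_def, mul_one]
    rw [this, D.de_smul, D.de_one, smul_zero]
  rw [PD.brP, D.Pb_C, D.E_C, hal, hde]
  have : Tmap (D.bb (algebraMap k R c)) (D.bb_zero_r _) q = 0 := by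
    ext n; simp [Tmap_coeff, hb]
  rw [this]
  simp

theorem PD.brP_smul_l (c : k) (p q : Polynomial R) :
    D.brP (c • p) q = c • D.brP p q := by
  have h1 : c • p = C (algebraMap k R c) * p := by
    rw [Algebra.smul_def]
    norm_cast
  have h2 : c • D.brP p q = C (algebraMap k R c) * D.brP p q := by
    rw [Algebra.smul_def]
    norm_cast
  rw [h1, h2, D.brP_leib_l, D.brP_C_zero]
  ring

/-- Extension principle: an additive `φ`-twisted derivation vanishing on
constants and `X` vanishes everywhere. -/
theorem genext {S : Type*} [CommRing S] (ψ : Polynomial R → S) (g : Polynomial R → S)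
    (hadd : ∀ p q, g (p + q) = g p + g q)
    (hmul : ∀ p q, g (p * q) = g p * ψ q + ψ p * g q)
    (hC : ∀ a : R, g (C a) = 0) (hX : g X = 0) : ∀ p, g p = 0 := by
  intro p
  induction p using Polynomial.induction_on with
  | C a => exact hC a
  | add u v hu hv => rw [hadd, hu, hv, add_zero]
  | monomial n a ih =>
    rw [pow_succ, ← mul_assoc, hmul, ih, hX, zero_mul, mul_zero, add_zero]

theorem PD.brP_zero_r (p : Polynomial R) : D.brP p 0 = 0 := by
  have := D.brP_add_r p 0 0; simpa using this.symm

theorem PD.brP_zero_l (p : Polynomial R) : D.brP 0 p = 0 := by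
  rw [D.brP_anti, D.brP_zero_r, neg_zero]

theorem PD.brP_neg_r (p q : Polynomial R) : D.brP p (-q) = - D.brP p q := by
  have h := D.brP_add_r p q (-q)
  rw [add_neg_cancel, D.brP_zero_r] at h
  linear_combination -h

theorem PD.brP_neg_l (p q : Polynomial R) : D.brP (-p) q = - D.brP p q := by
  rw [D.brP_anti, D.brP_neg_r, D.brP_anti q p, neg_neg]

/-- The Jacobiator of `brP`. -/
noncomputable def PD.J (p q r : Polynomial R) : Polynomial R :=
  D.brP p (D.brP q r) - D.brP (D.brP p q) r - D.brP q (D.brP p r)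

theorem PD.J_swap12 (p q r : Polynomial R) : D.J q p r = - D.J p q r := by
  rw [PD.J, PD.J, D.brP_anti q p, D.brP_neg_l]
  ring

theorem PD.J_swap23 (p q r : Polynomial R) : D.J p r q = - D.J p q r := by
  rw [PD.J, PD.J, D.brP_anti r q, D.brP_neg_r,
    D.brP_anti (D.brP p r) q, D.brP_anti r (D.brP p q)]
  ring

theorem PD.J_add3 (p q r r' : Polynomial R) :
    D.J p q (r + r') = D.J p q r + D.J p q r' := by
  rw [PD.J, PD.J, PD.J, D.brP_add_r, D.brP_add_r, D.brP_add_r, D.brP_add_r, D.brP_add_r]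
  ring

theorem PD.J_add1 (u v q r : Polynomial R) :
    D.J (u + v) q r = D.J u q r + D.J v q r := by
  rw [PD.J, PD.J, PD.J, D.brP_add_l u v (D.brP q r), D.brP_add_l u v q,
    D.brP_add_l (D.brP u q) (D.brP v q) r, D.brP_add_l u v r,
    D.brP_add_r q (D.brP u r) (D.brP v r)]
  ring

theorem PD.J_add2 (p u v r : Polynomial R) :
    D.J p (u + v) r = D.J p u r + D.J p v r := by
  rw [PD.J, PD.J, PD.J, D.brP_add_l u v r, D.brP_add_r p (D.brP u r) (D.brP v r),
    D.brP_add_r p u v, D.brP_add_l (D.brP p u) (D.brP p v) r,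
    D.brP_add_l u v (D.brP p r)]
  ring

theorem PD.J_mul3 (p q r s : Polynomial R) :
    D.J p q (r * s) = D.J p q r * s + r * D.J p q s := by
  rw [PD.J, PD.J, PD.J,
    D.brP_leib q r s,
    D.brP_leib p r s,
    D.brP_leib (D.brP p q) r s,
    D.brP_add_r p (D.brP q r * s) (r * D.brP q s),
    D.brP_leib p (D.brP q r) s,
    D.brP_leib p r (D.brP q s),
    D.brP_add_r q (D.brP p r * s) (r * D.brP p s),
    D.brP_leib q (D.brP p r) s,
    D.brP_leib q r (D.brP p s)]
  ring

theorem PD.J_mul2 (p q s r : Polynomial R) :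
    D.J p (q * s) r = D.J p q r * s + q * D.J p s r := by
  rw [show D.J p (q * s) r = - D.J p r (q * s) from by rw [D.J_swap23], D.J_mul3,
    show D.J p r q = - D.J p q r from by rw [D.J_swap23],
    show D.J p r s = - D.J p s r from by rw [D.J_swap23]]
  ring

theorem PD.J_mul1 (p s q r : Polynomial R) :
    D.J (p * s) q r = D.J p q r * s + p * D.J s q r := by
  rw [show D.J (p * s) q r = - D.J q (p * s) r from by rw [D.J_swap12], D.J_mul2,
    show D.J q p r = - D.J p q r from by rw [D.J_swap12],
    show D.J q s r = - D.J s q r from by rw [D.J_swap12]]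
  ring

theorem PD.J_CCC (a b c : R) : D.J (C a) (C b) (C c) = 0 := by
  rw [PD.J, D.brP_CC, D.brP_CC, D.brP_CC, D.brP_CC, D.brP_CC, D.brP_CC,
    ← map_sub, ← map_sub, D.bb_jac]
  simp

theorem PD.J_XCC (b c : R) : D.J X (C b) (C c) = 0 := by
  have hCX : D.brP (C b) X = -(C (D.al b) * X + C (D.de b)) := by
    rw [D.brP_anti, D.brP_XC]
  have e1 : D.brP X (D.brP (C b) (C c)) =
      C (D.al (D.bb b c)) * X + C (D.de (D.bb b c)) := by
    rw [D.brP_CC, D.brP_XC]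
  have e2 : D.brP (D.brP X (C b)) (C c)
      = C (D.bb (D.al b) c) * X + C (D.al b) * (C (D.al c) * X + C (D.de c))
        + C (D.bb (D.de b) c) := by
    rw [D.brP_XC, D.brP_add_l, D.brP_leib_l, D.brP_CC, D.brP_XC, D.brP_CC]
  have e3 : D.brP (C b) (D.brP X (C c))
      = C (D.bb b (D.al c)) * X + C (D.al c) * (-(C (D.al b) * X + C (D.de b)))
        + C (D.bb b (D.de c)) := by
    rw [D.brP_XC, D.brP_add_r, D.brP_leib, D.brP_CC, hCX, D.brP_CC]
  rw [PD.J, e1, e2, e3, D.al_bb, D.de_bb]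
  simp only [map_add, map_sub, map_mul]
  ring

theorem PD.J_XX (r : Polynomial R) : D.J X X r = 0 := by
  rw [PD.J, D.brP_XX, D.brP_zero_l]
  ring

theorem PD.J_zero (p q r : Polynomial R) : D.J p q r = 0 := by
  have step1 : ∀ (a b : R) (r : Polynomial R), D.J (C a) (C b) r = 0 := by
    intro a b
    refine genext id (D.J (C a) (C b)) (fun u v => D.J_add3 _ _ u v)
      (fun r s => D.J_mul3 _ _ r s) (fun c => D.J_CCC a b c) ?_
    rw [show D.J (C a) (C b) X = - D.J (C a) X (C b) from by rw [D.J_swap23],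
      show D.J (C a) X (C b) = - D.J X (C a) (C b) from by rw [D.J_swap12],
      D.J_XCC, neg_zero, neg_zero]
  have step1X : ∀ (b : R) (r : Polynomial R), D.J X (C b) r = 0 := by
    intro b
    refine genext id (D.J X (C b)) (fun u v => D.J_add3 _ _ u v)
      (fun r s => D.J_mul3 _ _ r s) (fun c => D.J_XCC b c) ?_
    rw [show D.J X (C b) X = - D.J X X (C b) from by rw [D.J_swap23], D.J_XX, neg_zero]
  have step2 : ∀ (a : R) (q r : Polynomial R), D.J (C a) q r = 0 := by
    intro a q r
    refine genext id (fun q => D.J (C a) q r) ?_ ?_ (fun b => step1 a b r) ?_ q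
    · intro u v
      exact D.J_add2 _ _ _ _
    · intro u v
      simp only [id]
      exact D.J_mul2 _ _ _ _
    · rw [show D.J (C a) X r = - D.J X (C a) r from by rw [D.J_swap12], step1X, neg_zero]
  have step2X : ∀ (q r : Polynomial R), D.J X q r = 0 := by
    intro q r
    refine genext id (fun q => D.J X q r) ?_ ?_ (fun b => step1X b r) ?_ q
    · intro u v
      exact D.J_add2 _ _ _ _
    · intro u v
      simp only [id]
      exact D.J_mul2 _ _ _ _
    · exact D.J_XX r
  refine genext id (fun p => D.J p q r) ?_ ?_ (fun a => step2 a q r) (step2X q r) p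
  · intro u v
    exact D.J_add1 _ _ _ _
  · intro u v
    simp only [id]
    exact D.J_mul1 _ _ _ _

theorem PD.brP_jac (p q r : Polynomial R) :
    D.brP p (D.brP q r) = D.brP (D.brP p q) r + D.brP q (D.brP p r) := by
  have h := D.J_zero p q r
  rw [PD.J] at h
  linear_combination h

end St19

open Polynomial in
/-- Proposition 1.9 (first part): if a Poisson algebra `A` is generated by a
Poisson subalgebra `B` and one element `x`, `α` is a Poisson derivation on `B`,
and `δ(b) := {x,b} − α(b)x` lies in `B` for all `b ∈ B`, then `δ` is a
derivation on `B` satisfying the compatibility identity, the Poisson polynomial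
algebra `B[X; α, δ]_p` exists, and the map fixing `B` with `X ↦ x` is a
surjective Poisson homomorphism `B[X; α, δ]_p → A`. -/
theorem statement19 (k : Type*) [Field k] [CharZero k]
    (A : Type*) [CommRing A] [Algebra k A]
    (br : A → A → A) (hbr : IsPoissonBracket k br)
    (B : Subalgebra k A)
    (hBcl : ∀ a b : A, a ∈ B → b ∈ B → br a b ∈ B)
    (x : A) (hgen : Algebra.adjoin k ((B : Set A) ∪ {x}) = ⊤)
    (α : B →ₗ[k] B)
    (hαder : ∀ a b : B, (α (a * b) : A) = (α a : A) * (b : A) + (a : A) * (α b : A))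
    (hαpois : ∀ a b : B,
      (α ⟨br (a : A) (b : A), hBcl a b a.2 b.2⟩ : A)
        = br ((α a : A)) (b : A) + br (a : A) ((α b : A)))
    (hδB : ∀ b : B, br x (b : A) - (α b : A) * x ∈ B) :
    -- `δ` is a derivation on `B`
    (∀ a b : B, br x ((a : A) * (b : A)) - (α (a * b) : A) * x
      = (br x (a : A) - (α a : A) * x) * (b : A)
        + (a : A) * (br x (b : A) - (α b : A) * x)) ∧
    -- `δ` satisfies the compatibility identity making `B[X; α, δ]_p` a Poisson
    -- polynomial algebra
    (∀ a b : B, br x (br (a : A) (b : A))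
        - (α ⟨br (a : A) (b : A), hBcl a b a.2 b.2⟩ : A) * x
      = br (br x (a : A) - (α a : A) * x) (b : A)
        + br (a : A) (br x (b : A) - (α b : A) * x)
        + (α a : A) * (br x (b : A) - (α b : A) * x)
        - (br x (a : A) - (α a : A) * x) * (α b : A)) ∧
    -- the Poisson polynomial algebra `B[X; α, δ]_p` exists and maps onto `A`
    (∃ brP : Polynomial B → Polynomial B → Polynomial B,
      IsPoissonBracket k brP ∧
      (∀ a b : B, brP (C a) (C b) = C ⟨br (a : A) (b : A), hBcl a b a.2 b.2⟩) ∧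
      (∀ b : B, brP X (C b) = C (α b) * X + C ⟨br x (b : A) - (α b : A) * x, hδB b⟩) ∧
      ∃ φ : Polynomial B →ₐ[k] A,
        (∀ b : B, φ (C b) = (b : A)) ∧ φ X = x ∧ Function.Surjective φ ∧
        ∀ p q : Polynomial B, φ (brP p q) = br (φ p) (φ q)) := by
  obtain ⟨hadd_l, hadd_r, hsmul_l, hanti, hjac, hleib⟩ := hbr
  -- derived facts about `br` on `A`
  have hzero_r : ∀ u : A, br u 0 = 0 := by
    intro u; have := hadd_r u 0 0; simpa using this.symm
  have hneg_r : ∀ u v : A, br u (-v) = - br u v := by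
    intro u v
    have h := hadd_r u v (-v)
    rw [add_neg_cancel, hzero_r] at h
    linear_combination -h
  have hsub_r : ∀ u v w : A, br u (v - w) = br u v - br u w := by
    intro u v w
    rw [sub_eq_add_neg, hadd_r, hneg_r, sub_eq_add_neg]
  have hsub_l : ∀ u v w : A, br (u - v) w = br u w - br v w := by
    intro u v w
    rw [hanti, hsub_r, hanti w u, hanti w v]; ring
  have hleib_l : ∀ u v w : A, br (u * v) w = br u w * v + u * br v w := by
    intro u v w
    rw [hanti, hleib, hanti w u, hanti w v]; ring
  have hsmul_r : ∀ (r : k) (u v : A), br u (r • v) = r • br u v := by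
    intro r u v
    rw [hanti, hsmul_l, hanti v u, smul_neg, neg_neg]
  have hbrxx : br x x = 0 := by
    have h : br x x = - br x x := hanti x x
    have h2 : (2 : k) • br x x = 0 := by
      rw [two_smul]; nth_rewrite 1 [h]; simp
    have := congrArg (fun y => ((2:k)⁻¹) • y) h2
    simpa [smul_smul] using this
  -- part 1 : δ is a derivation
  have part1 : ∀ a b : B, br x ((a : A) * (b : A)) - (α (a * b) : A) * x
      = (br x (a : A) - (α a : A) * x) * (b : A)
        + (a : A) * (br x (b : A) - (α b : A) * x) := by
    intro a b
    rw [hαder, hleib]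
    ring
  -- part 2 : compatibility identity
  have part2 : ∀ a b : B, br x (br (a : A) (b : A))
        - (α ⟨br (a : A) (b : A), hBcl a b a.2 b.2⟩ : A) * x
      = br (br x (a : A) - (α a : A) * x) (b : A)
        + br (a : A) (br x (b : A) - (α b : A) * x)
        + (α a : A) * (br x (b : A) - (α b : A) * x)
        - (br x (a : A) - (α a : A) * x) * (α b : A) := by
    intro a b
    have I1 : br x (br (a : A) (b : A))
        = br (br x (a : A)) (b : A) + br (a : A) (br x (b : A)) := hjac x _ _
    have I3 : br (br x (a : A) - (α a : A) * x) (b : A)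
        = br (br x (a : A)) (b : A) - (br ((α a : A)) (b : A) * x
            + (α a : A) * br x (b : A)) := by
      rw [hsub_l, hleib_l]
    have I4 : br (a : A) (br x (b : A) - (α b : A) * x)
        = br (a : A) (br x (b : A)) - (br (a : A) ((α b : A)) * x
            + (α b : A) * br (a : A) x) := by
      rw [hsub_r, hleib]
    rw [I1, I3, I4, hαpois a b, hanti (a : A) x]
    ring
  refine ⟨part1, part2, ?_⟩
  -- the Poisson data on `B`
  have hbb_smul : ∀ (r : k) (a b : B),
      (⟨br ((r • a : B) : A) (b : A), hBcl _ _ (r • a).2 b.2⟩ : B)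
        = r • ⟨br (a : A) (b : A), hBcl a b a.2 b.2⟩ := by
    intro r a b
    apply Subtype.ext
    have : ((r • a : B) : A) = r • (a : A) := rfl
    simp only [this, hsmul_l]
    rfl
  let D : St19.PD k B :=
  { bb := fun a b => ⟨br (a : A) (b : A), hBcl a b a.2 b.2⟩
    al := fun b => α b
    de := fun b => ⟨br x (b : A) - (α b : A) * x, hδB b⟩
    bb_add_l := by
      intro a b c; apply Subtype.ext
      have : ((a + b : B) : A) = (a : A) + (b : A) := rfl
      simp only [this, hadd_l]
      rfl
    bb_add_r := by
      intro a b c; apply Subtype.ext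
      have : ((b + c : B) : A) = (b : A) + (c : A) := rfl
      simp only [this, hadd_r]
      rfl
    bb_smul_l := hbb_smul
    bb_anti := by
      intro a b; apply Subtype.ext
      simpa using hanti (a : A) (b : A)
    bb_jac := by
      intro a b c; apply Subtype.ext
      simpa using hjac (a : A) (b : A) (c : A)
    bb_leib := by
      intro a b c; apply Subtype.ext
      have : ((b * c : B) : A) = (b : A) * (c : A) := rfl
      simp only [this, hleib]
      rfl
    al_add := fun a b => map_add α a b
    al_smul := fun r a => map_smul α r a
    al_mul := by
      intro a b; apply Subtype.ext
      have := hαder a b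
      simpa using this
    de_add := by
      intro a b; apply Subtype.ext
      have h1 : ((a + b : B) : A) = (a : A) + (b : A) := rfl
      have h2 : ((α (a + b) : B) : A) = (α a : A) + (α b : A) := by
        rw [map_add]; rfl
      simp only [h1, h2, hadd_r]
      push_cast
      ring
    de_smul := by
      intro r a; apply Subtype.ext
      have h1 : ((r • a : B) : A) = r • (a : A) := rfl
      have h2 : ((α (r • a) : B) : A) = r • (α a : A) := by
        rw [map_smul]; rfl
      have h3 : ((r • (⟨br x (a : A) - (α a : A) * x, hδB a⟩ : B) : B) : A)
          = r • (br x (a : A) - (α a : A) * x) := rfl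
      simp only [h1, h2, h3, hsmul_r]
      rw [smul_sub, smul_mul_assoc]
    de_mul := by
      intro a b; apply Subtype.ext
      have h1 : ((a * b : B) : A) = (a : A) * (b : A) := rfl
      have := part1 a b
      rw [← h1] at this
      simpa using this
    al_bb := by
      intro a b; apply Subtype.ext
      have := hαpois a b
      simpa using this
    de_bb := by
      intro a b; apply Subtype.ext
      have := part2 a b
      simpa using this }
  refine ⟨D.brP, ⟨D.brP_add_l, D.brP_add_r, D.brP_smul_l,
    fun p q => D.brP_anti p q, fun p q r => D.brP_jac p q r,
    fun p q r => D.brP_leib p q r⟩, fun a b => D.brP_CC a b, fun b => D.brP_XC b, ?_⟩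
  -- the algebra map
  refine ⟨(Polynomial.aeval (R := B) x).restrictScalars k, ?_, ?_, ?_, ?_⟩
  case _ =>
    intro b
    simp only [AlgHom.coe_restrictScalars', Polynomial.aeval_C]
    rfl
  case _ => simp
  case _ =>
    set φ := (Polynomial.aeval (R := B) x).restrictScalars k with hφ
    have hφC : ∀ b : B, φ (C b) = (b : A) := by
      intro b
      simp only [hφ, AlgHom.coe_restrictScalars', Polynomial.aeval_C]
      rfl
    have hφX : φ X = x := by simp [hφ]
    intro y
    have : (⊤ : Subalgebra k A) ≤ φ.range := by
      rw [← hgen]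
      apply Algebra.adjoin_le
      rintro z (hz | hz)
      · exact ⟨C ⟨z, hz⟩, hφC ⟨z, hz⟩⟩
      · rw [Set.mem_singleton_iff] at hz
        exact ⟨X, by show φ X = z; rw [hφX, hz]⟩
    exact this (Algebra.mem_top)
  case _ =>
    set φ := (Polynomial.aeval (R := B) x).restrictScalars k with hφ
    have hφC : ∀ b : B, φ (C b) = (b : A) := by
      intro b
      simp only [hφ, AlgHom.coe_restrictScalars', Polynomial.aeval_C]
      rfl
    have hφX : φ X = x := by simp [hφ]
    -- generator values
    have vCC : ∀ a b : B, φ (D.brP (C a) (C b)) = br (φ (C a)) (φ (C b)) := by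
      intro a b
      rw [D.brP_CC, hφC, hφC, hφC]
    have vXC : ∀ b : B, φ (D.brP X (C b)) = br (φ X) (φ (C b)) := by
      intro b
      simp only [D.brP_XC, map_add, map_mul, hφC, hφX]
      show (α b : A) * x + (br x (b : A) - (α b : A) * x) = br x (b : A)
      ring
    have vCX : ∀ b : B, φ (D.brP (C b) X) = br (φ (C b)) (φ X) := by
      intro b
      rw [D.brP_anti, map_neg, vXC, hanti (φ (C b)) (φ X)]
    have vXX : φ (D.brP X X) = br (φ X) (φ X) := by
      rw [D.brP_XX, map_zero, hφX, hbrxx]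
    have step1 : ∀ (a : B) (q : Polynomial B),
        φ (D.brP (C a) q) = br (φ (C a)) (φ q) := by
      intro a q
      have h := St19.genext (S := A) (⇑φ)
        (fun q => φ (D.brP (C a) q) - br (φ (C a)) (φ q))
        (by
          intro u v
          simp only [D.brP_add_r, map_add, hadd_r]
          ring)
        (by
          intro u v
          simp only [D.brP_leib, map_add, map_mul, hleib]
          ring)
        (fun b => by simp only [vCC, sub_self])
        (by simp only [vCX, sub_self]) q
      linear_combination h
    have step1X : ∀ q : Polynomial B, φ (D.brP X q) = br (φ X) (φ q) := by
      intro q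
      have h := St19.genext (S := A) (⇑φ)
        (fun q => φ (D.brP X q) - br (φ X) (φ q))
        (by
          intro u v
          simp only [D.brP_add_r, map_add, hadd_r]
          ring)
        (by
          intro u v
          simp only [D.brP_leib, map_add, map_mul, hleib]
          ring)
        (fun b => by simp only [vXC, sub_self])
        (by simp only [vXX, sub_self]) q
      linear_combination h
    intro p q
    have h := St19.genext (S := A) (⇑φ)
      (fun p => φ (D.brP p q) - br (φ p) (φ q))
      (by
        intro u v
        simp only [D.brP_add_l, map_add, hadd_l]
        ring)
      (by
        intro u v
        simp only [D.brP_leib_l, map_add, map_mul, hleib_l]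
        ring)
      (fun a => by simp only [step1, sub_self])
      (by simp only [step1X, sub_self]) p
    linear_combination h
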